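/- Let G be a finite connected k-regular simple graph with n vertices and m edges, where k ≥ 2 (so m = kn/2 ≥ n). Then for every complex number λ, det(λ·I_{2m} − U⁺) = (λ² − 1)^{m−n} · det((λ² + k − 1)·I_n − λ·A(G)). (Characteristic polynomial identity from the proof of Theorem 5.1.) -/

import Mathlib

open Matrix SimpleGraph Polynomial

/-- The transition matrix `U` (over `ℝ`) of the discrete-time quantum walk on `G`, indexed
by darts: `U e f = 2 / deg (t f)` if `t f = o e` and `f ≠ e⁻¹`, `U e f = 2 / deg (t f) - 1`
if `f = e⁻¹`, and `0` otherwise. -/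
noncomputable def quantumUR {V : Type*} [Fintype V] (G : SimpleGraph V)
    [DecidableRel G.Adj] [DecidableEq V] : Matrix G.Dart G.Dart ℝ :=
  fun e f =>
    if f.toProd.2 = e.toProd.1 ∧ f ≠ e.symm then (2 : ℝ) / (G.degree f.toProd.2 : ℝ)
    else if f = e.symm then (2 : ℝ) / (G.degree f.toProd.2 : ℝ) - 1
    else 0

/-- The positive support of a real matrix, viewed as a matrix over a semiring `R`:
entry `1` where the original entry is positive, `0` otherwise. -/
noncomputable def posSupport {α : Type*} (R : Type*) [Zero R] [One R]
    (F : Matrix α α ℝ) : Matrix α α R :=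
  fun i j => if 0 < F i j then 1 else 0

/-!
Let `S`, `T` be the dart–vertex incidence matrices of origins and termini and `J` the permutation
matrix of dart reversal, so that `J² = 1`, `J S = T`, `Tᵀ S = A` and `Tᵀ T = D` (the degree
matrix). When every degree is at least `2`, the positive support is `U⁺ = S Tᵀ - J`, hence with
`c = λ² - 1`
  `(λ - U⁺)(λ - J) = c - S Tᵀ (λ - J)`   and   `Tᵀ (λ - J) S = λ A - D`.
Since `det (λ - J) = c ^ m` (the darts come in `m` reversed pairs), Sylvester's identity
`c ^ n det (c - S Y) = c ^ (2m) det (c - Y S)` gives, over any commutative ring,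
  `c ^ (m + n) det (λ - U⁺) = c ^ (2m) det (c + D - λ A)`.
Taking `λ = X` in `ℤ[X]`, where `c ≠ 0`, we may cancel `c ^ (m + n)`; then evaluate at `λ`.
-/

open scoped Kronecker

namespace Function.Involutive

variable {ι : Type*} {σ : ι → ι} (hσ : Involutive σ) {p : ι → Prop} [DecidablePred p]
  (hp : ∀ i, p (σ i) ↔ ¬ p i)

def finTwoProdEquiv : Fin 2 × {i // p i} ≃ ι where
  toFun x := if x.1 = 0 then x.2 else σ x.2
  invFun i := if h : p i then (0, ⟨i, h⟩) else (1, ⟨σ i, (hp i).2 h⟩)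
  left_inv := by
    rintro ⟨j, i, hi⟩
    fin_cases j
    · simp [hi]
    · have : ¬ p (σ i) := fun h => (hp i).1 h hi
      simp [this, hσ i]
  right_inv i := by
    by_cases h : p i <;> simp [h, hσ i]

theorem apply_finTwoProdEquiv (x : Fin 2 × {i // p i}) :
    σ (finTwoProdEquiv hσ hp x) = finTwoProdEquiv hσ hp (x.1.rev, x.2) := by
  obtain ⟨j, i⟩ := x
  fin_cases j <;> simp [finTwoProdEquiv, hσ i]

end Function.Involutive

namespace Matrix

section

variable {m n R : Type*} [Fintype m] [Fintype n] [DecidableEq m] [DecidableEq n] [CommRing R]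

theorem det_smul_one_sub_mul_comm (A : Matrix m n R) (B : Matrix n m R) (c : R) :
    c ^ Fintype.card n * (c • 1 - A * B).det = c ^ Fintype.card m * (c • 1 - B * A).det := by
  simpa [eval_charpoly, smul_one_eq_diagonal] using congrArg (eval c) (charpoly_mul_comm' A B)

end

variable {ι R : Type*} [Fintype ι] [DecidableEq ι] [CommRing R]

theorem det_smul_one_sub_permMatrix_of_involutive (σ : Equiv.Perm ι)
    (hσ : Function.Involutive σ) (hfix : ∀ i, σ i ≠ i) (a : R) :
    (a • 1 - σ.permMatrix R).det = (a ^ 2 - 1) ^ (Fintype.card ι / 2) := by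
  -- Orienting each orbit `{i, σ i}` by an enumeration of `ι` splits `ι` into two sheets that `σ`
  -- swaps; in these coordinates `a • 1 - σ.permMatrix R` is `!![a, -1; -1, a] ⊗ₖ 1`.
  let f := Fintype.equivFin ι
  have hp : ∀ i, f (σ i) < f (σ (σ i)) ↔ ¬ f i < f (σ i) := fun i => by
    rw [hσ i, not_lt]
    exact ⟨le_of_lt, fun h => lt_of_le_of_ne h (f.injective.ne (hfix i))⟩
  let e := hσ.finTwoProdEquiv (p := fun i => f i < f (σ i)) hp
  have hcard : Fintype.card ι / 2 = Fintype.card {i // f i < f (σ i)} := by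
    have := Fintype.card_congr e
    rw [Fintype.card_prod, Fintype.card_fin] at this
    omega
  have hblock : (a • 1 - σ.permMatrix R).submatrix e e =
      !![a, -1; -1, a] ⊗ₖ (1 : Matrix {i // f i < f (σ i)} _ R) := by
    ext ⟨j, x⟩ ⟨j', x'⟩
    simp only [submatrix_apply, sub_apply, smul_apply, one_apply, Equiv.apply_eq_iff_eq,
      PEquiv.toMatrix_apply, Equiv.toPEquiv_apply, Option.mem_def, Option.some_inj,
      e, hσ.apply_finTwoProdEquiv, kronecker_apply, Prod.mk.injEq]
    fin_cases j <;> fin_cases j' <;> by_cases h : x = x' <;> simp [h]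
  rw [← det_submatrix_equiv_self e, hblock, det_kronecker, det_fin_two_of, det_one, one_pow,
    mul_one, hcard]
  ring

end Matrix

theorem posSupport_map {α R S : Type*} [NonAssocSemiring R] [NonAssocSemiring S] (f : R →+* S)
    (F : Matrix α α ℝ) : (posSupport R F).map f = posSupport S F := by
  ext i j
  simp [posSupport, apply_ite f]

namespace SimpleGraph

variable {V : Type*} (G : SimpleGraph V) (R : Type*)

def dartSymmPerm : Equiv.Perm G.Dart := Dart.symm_involutive.toPerm

def dartFstMatrix [Zero R] [One R] [DecidableEq V] : Matrix G.Dart V R :=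
  of fun d v => if d.fst = v then 1 else 0

def dartSndMatrix [Zero R] [One R] [DecidableEq V] : Matrix G.Dart V R :=
  of fun d v => if d.snd = v then 1 else 0

variable [DecidableRel G.Adj]

theorem adjMatrix_map {S : Type*} [NonAssocSemiring R] [NonAssocSemiring S] (f : R →+* S) :
    (G.adjMatrix R).map f = G.adjMatrix S := by
  ext u v
  simp [adjMatrix_apply, apply_ite f]

variable [Fintype V]

theorem card_le_card_edgeFinset_of_two_le_degree (hdeg : ∀ v, 2 ≤ G.degree v) :
    Fintype.card V ≤ G.edgeFinset.card := by
  have hsum := G.sum_degrees_eq_twice_card_edges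
  have hle : ∑ _v : V, 2 ≤ ∑ v, G.degree v := Finset.sum_le_sum fun v _ => hdeg v
  simp only [Finset.sum_const, Finset.card_univ, smul_eq_mul] at hle
  omega

variable [DecidableEq V]

theorem degMatrix_map {S : Type*} [NonAssocSemiring R] [NonAssocSemiring S] (f : R →+* S) :
    (G.degMatrix R).map f = G.degMatrix S := by
  simp [degMatrix]

variable {R} in
theorem IsRegularOfDegree.degMatrix_eq [NonAssocSemiring R] {k : ℕ}
    (hreg : G.IsRegularOfDegree k) : G.degMatrix R = (k : R) • 1 := by
  ext u v
  simp [degMatrix, diagonal_apply, one_apply, hreg u]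

section NonAssocSemiring

variable [NonAssocSemiring R]

theorem permMatrix_dartSymmPerm_mul_dartFstMatrix :
    G.dartSymmPerm.permMatrix R * G.dartFstMatrix R = G.dartSndMatrix R := by
  ext d v
  simp [PEquiv.toMatrix_toPEquiv_mul, dartSymmPerm, dartFstMatrix, dartSndMatrix]

theorem permMatrix_dartSymmPerm_mul_self :
    G.dartSymmPerm.permMatrix R * G.dartSymmPerm.permMatrix R = 1 := by
  rw [← permMatrix_mul, show G.dartSymmPerm * G.dartSymmPerm = 1 from
    Equiv.ext Dart.symm_symm, permMatrix_one]

theorem transpose_dartSndMatrix_mul_dartFstMatrix :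
    (G.dartSndMatrix R)ᵀ * G.dartFstMatrix R = G.adjMatrix R := by
  ext u v
  simp only [mul_apply, transpose_apply, dartSndMatrix, dartFstMatrix, of_apply, ite_mul, one_mul,
    zero_mul, adjMatrix_apply]
  by_cases h : G.Adj u v
  · rw [Finset.sum_eq_single (Dart.mk (v, u) h.symm)]
    · simp [h]
    · intro d _ hd
      simp only [ite_eq_right_iff]
      intro h1 h2
      exact absurd (Dart.ext _ _ (Prod.ext h2 h1)) hd
    · simp
  · rw [if_neg h]
    refine Finset.sum_eq_zero fun d _ => ?_
    simp only [ite_eq_right_iff]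
    rintro rfl rfl
    exact absurd d.adj.symm h

theorem transpose_dartFstMatrix_mul_self :
    (G.dartFstMatrix R)ᵀ * G.dartFstMatrix R = G.degMatrix R := by
  ext u v
  simp only [mul_apply, transpose_apply, dartFstMatrix, of_apply, mul_ite, mul_one,
    mul_zero, degMatrix, diagonal_apply]
  split_ifs with h
  · subst h
    simp only [← ite_and, and_self, Finset.sum_boole]
    exact congrArg Nat.cast (G.dart_fst_fiber_card_eq_degree u)
  · exact Finset.sum_eq_zero fun d _ => by grind

theorem transpose_dartSndMatrix_mul_self :
    (G.dartSndMatrix R)ᵀ * G.dartSndMatrix R = G.degMatrix R := by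
  ext u v
  rw [← transpose_dartFstMatrix_mul_self]
  exact (Equiv.sum_comp G.dartSymmPerm _).symm

end NonAssocSemiring

theorem posSupport_quantumUR [Ring R] (hdeg : ∀ v, 2 ≤ G.degree v) :
    posSupport R (quantumUR G) =
      G.dartFstMatrix R * (G.dartSndMatrix R)ᵀ - G.dartSymmPerm.permMatrix R := by
  ext d d'
  have hST : (G.dartFstMatrix R * (G.dartSndMatrix R)ᵀ) d d' =
      if d'.snd = d.fst then 1 else 0 := by
    simp [mul_apply, dartFstMatrix, dartSndMatrix, eq_comm]
  have hJ : G.dartSymmPerm.permMatrix R d d' = if d' = d.symm then 1 else 0 := by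
    simp [dartSymmPerm, eq_comm]
  have hpos : ∀ v, (0 : ℝ) < 2 / G.degree v := fun v => by
    have : 0 < G.degree v := zero_lt_two.trans_le (hdeg v)
    positivity
  have hrev : ∀ v, (2 : ℝ) / G.degree v ≤ 1 := fun v =>
    div_le_one_of_le₀ (by exact_mod_cast hdeg v) (Nat.cast_nonneg _)
  rw [Matrix.sub_apply, hST, hJ, posSupport, quantumUR]
  by_cases hsymm : d' = d.symm
  · subst hsymm
    simp [hrev]
  · by_cases hadj : d'.snd = d.fst
    · simp [hsymm, hadj, hpos]
    · simp [hsymm, hadj]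

variable {R} [CommRing R]

theorem det_smul_one_sub_permMatrix_dartSymmPerm (a : R) :
    (a • 1 - G.dartSymmPerm.permMatrix R).det = (a ^ 2 - 1) ^ G.edgeFinset.card := by
  rw [det_smul_one_sub_permMatrix_of_involutive _ Dart.symm_involutive Dart.symm_ne,
    dart_card_eq_twice_card_edges]
  simp

theorem pow_mul_det_smul_one_sub_posSupport_quantumUR (hdeg : ∀ v, 2 ≤ G.degree v) (a : R) :
    (a ^ 2 - 1) ^ (G.edgeFinset.card + Fintype.card V) *
        (a • 1 - posSupport R (quantumUR G)).det =
      (a ^ 2 - 1) ^ (2 * G.edgeFinset.card) *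
        ((a ^ 2 - 1) • 1 + G.degMatrix R - a • G.adjMatrix R).det := by
  rw [posSupport_quantumUR G R hdeg]
  set S := G.dartFstMatrix R
  set T := G.dartSndMatrix R
  set J := G.dartSymmPerm.permMatrix R
  have hJJ : J * J = 1 := G.permMatrix_dartSymmPerm_mul_self R
  have hfactor : (a • 1 - (S * Tᵀ - J)) * (a • 1 - J) =
      (a ^ 2 - 1) • 1 - S * (Tᵀ * (a • 1 - J)) := by
    simp only [Matrix.sub_mul, Matrix.mul_sub, Matrix.smul_mul, Matrix.mul_smul, Matrix.one_mul,
      Matrix.mul_one, hJJ, Matrix.mul_assoc]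
    module
  have hcompress : Tᵀ * (a • 1 - J) * S = a • G.adjMatrix R - G.degMatrix R := by
    rw [Matrix.mul_assoc, Matrix.sub_mul, Matrix.smul_mul, Matrix.one_mul (M := S),
      G.permMatrix_dartSymmPerm_mul_dartFstMatrix R, Matrix.mul_sub, Matrix.mul_smul,
      G.transpose_dartSndMatrix_mul_dartFstMatrix R, G.transpose_dartSndMatrix_mul_self R]
  calc _ = (a ^ 2 - 1) ^ Fintype.card V *
        ((a ^ 2 - 1) • 1 - S * (Tᵀ * (a • 1 - J))).det := by
        rw [← hfactor, det_mul, det_smul_one_sub_permMatrix_dartSymmPerm]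
        ring
    _ = (a ^ 2 - 1) ^ (2 * G.edgeFinset.card) *
        ((a ^ 2 - 1) • 1 - Tᵀ * (a • 1 - J) * S).det := by
        rw [det_smul_one_sub_mul_comm, dart_card_eq_twice_card_edges]
    _ = _ := by
        rw [hcompress]
        congr 2
        abel

theorem det_smul_one_sub_posSupport_quantumUR (hdeg : ∀ v, 2 ≤ G.degree v) (a : R) :
    (a • 1 - posSupport R (quantumUR G)).det =
      (a ^ 2 - 1) ^ (G.edgeFinset.card - Fintype.card V) *
        ((a ^ 2 - 1) • 1 + G.degMatrix R - a • G.adjMatrix R).det := by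
  have hX : (X ^ 2 - 1 : ℤ[X]) ≠ 0 := by
    simpa using X_pow_sub_C_ne_zero two_pos (1 : ℤ)
  have hpoly : ((X : ℤ[X]) • 1 - posSupport ℤ[X] (quantumUR G)).det =
      (X ^ 2 - 1) ^ (G.edgeFinset.card - Fintype.card V) *
        ((X ^ 2 - 1 : ℤ[X]) • 1 + G.degMatrix ℤ[X] - (X : ℤ[X]) • G.adjMatrix ℤ[X]).det := by
    refine mul_left_cancel₀ (pow_ne_zero (G.edgeFinset.card + Fintype.card V) hX) ?_
    rw [pow_mul_det_smul_one_sub_posSupport_quantumUR G hdeg, ← mul_assoc, ← pow_add]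
    have hnm := G.card_le_card_edgeFinset_of_two_le_degree hdeg
    congr 2
    omega
  let f := eval₂RingHom (Int.castRingHom R) a
  have hfX : f X = a := eval₂_X _ _
  simpa only [map_mul, map_pow, map_sub, map_add, map_one, RingHom.map_det,
    RingHom.mapMatrix_apply, Matrix.map_smul' _ _ _ (map_mul f),
    Matrix.map_one f (map_zero f) (map_one f), hfX, posSupport_map, degMatrix_map,
    adjMatrix_map] using congrArg f hpoly

end SimpleGraph

theorem stmt9_general {V : Type*} [Fintype V] [DecidableEq V] (G : SimpleGraph V)
    [DecidableRel G.Adj] (k : ℕ)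
    (hreg : G.IsRegularOfDegree k) (hk : 2 ≤ k) (lam : ℂ) :
    (lam • (1 : Matrix G.Dart G.Dart ℂ) - posSupport ℂ (quantumUR G)).det =
      (lam ^ 2 - 1) ^ (G.edgeFinset.card - Fintype.card V) *
        ((lam ^ 2 + (k : ℂ) - 1) • (1 : Matrix V V ℂ) - lam • G.adjMatrix ℂ).det := by
  rw [G.det_smul_one_sub_posSupport_quantumUR (fun v => hreg v ▸ hk) lam, hreg.degMatrix_eq]
  congr 2
  module

theorem stmt9 {V : Type*} [Fintype V] [DecidableEq V] (G : SimpleGraph V)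
    [DecidableRel G.Adj] (hconn : G.Connected) (k : ℕ)
    (hreg : G.IsRegularOfDegree k) (hk : 2 ≤ k) (lam : ℂ) :
    (lam • (1 : Matrix G.Dart G.Dart ℂ) - posSupport ℂ (quantumUR G)).det =
      (lam ^ 2 - 1) ^ (G.edgeFinset.card - Fintype.card V) *
        ((lam ^ 2 + (k : ℂ) - 1) • (1 : Matrix V V ℂ) - lam • G.adjMatrix ℂ).det :=
  stmt9_general G k hreg hk lam
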